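/- For a permutation $\sigma$ of $\{1,2,3,4\}$, the following are equivalent: (a) $|\phi_{z^\sigma}| = |\phi_z|$ for every $z \in \mathbb{C}^4$ (where $z^\sigma = (z_{\sigma(1)},z_{\sigma(2)},z_{\sigma(3)},z_{\sigma(4)})$); (b) $\sigma$ preserves the partition structure, i.e., $\{\sigma(1),\sigma(4)\} = \{1,4\}$ or $\{\sigma(1),\sigma(4)\} = \{2,3\}$; (c) $\sigma$ is one of the eight permutations $\langle 1234\rangle, \langle 1324\rangle, \langle 4231\rangle, \langle 4321\rangle, \langle 2143\rangle, \langle 2413\rangle, \langle 3142\rangle, \langle 3412\rangle$. -/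

import Mathlib

open Complex Real

noncomputable def Xfun (z : Fin 4 → ℂ) (σ : ℝ) : ℝ :=
  ‖z 0 * Complex.exp (σ * Complex.I) + (starRingEnd ℂ) (z 3)‖ +
  ‖z 1 * Complex.exp (σ * Complex.I) + (starRingEnd ℂ) (z 2)‖

noncomputable def Xnorm (z : Fin 4 → ℂ) : ℝ := ⨆ σ : ℝ, Xfun z σ

noncomputable def phase (z : Fin 4 → ℂ) : ℝ :=
  (Complex.arg (z 0) + Complex.arg (z 3)) - (Complex.arg (z 1) + Complex.arg (z 2))

/-! The phase of `z ∘ σ` is the sum of the arguments of `z` over the pair `{σ 0, σ 3}` minus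
the sum over its complement `{σ 1, σ 2}`. If that pair is a block of the partition
`{0, 3} ∪ {1, 2}`, these are the two sums defining `phase z`, possibly swapped. Otherwise both pairs
meet both blocks, so for `w = (1, i, i, 1)`, which is constant on blocks, the two sums agree:
`phase (w ∘ σ) = 0`, while `phase w = -π ≡ π`. -/

namespace Phase

lemma eq_sum_sub_sum (z : Fin 4 → ℂ) :
    phase z = ∑ i ∈ {0, 3}, arg (z i) - ∑ i ∈ {1, 2}, arg (z i) := by
  rw [Finset.sum_pair (by decide), Finset.sum_pair (by decide), phase]

lemma comp_perm_eq_sum_sub_sum (z : Fin 4 → ℂ) (σ : Equiv.Perm (Fin 4)) :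
    phase (fun i => z (σ i)) =
      ∑ i ∈ {σ 0, σ 3}, arg (z i) - ∑ i ∈ ({σ 0, σ 3} : Finset (Fin 4))ᶜ, arg (z i) := by
  have hcompl : ({σ 0, σ 3} : Finset (Fin 4))ᶜ = {σ 1, σ 2} := by
    revert σ; decide
  rw [hcompl, Finset.sum_pair (σ.injective.ne (by decide)),
    Finset.sum_pair (σ.injective.ne (by decide)), phase]

lemma comp_perm_eq_self_of_pair_eq (z : Fin 4 → ℂ) {σ : Equiv.Perm (Fin 4)}
    (hσ : ({σ 0, σ 3} : Finset (Fin 4)) = {0, 3}) :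
    phase (fun i => z (σ i)) = phase z := by
  rw [comp_perm_eq_sum_sub_sum, hσ, eq_sum_sub_sum]
  rfl

lemma comp_perm_eq_neg_of_pair_eq (z : Fin 4 → ℂ) {σ : Equiv.Perm (Fin 4)}
    (hσ : ({σ 0, σ 3} : Finset (Fin 4)) = {1, 2}) :
    phase (fun i => z (σ i)) = -phase z := by
  rw [comp_perm_eq_sum_sub_sum, hσ, eq_sum_sub_sum, neg_sub]
  rfl

def innerIndicator : Fin 4 → ℕ := ![0, 1, 1, 0]

lemma innerIndicator_add_eq_of_not_block {σ : Equiv.Perm (Fin 4)}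
    (hσ : ¬(({σ 0, σ 3} : Finset (Fin 4)) = {0, 3} ∨ ({σ 0, σ 3} : Finset (Fin 4)) = {1, 2})) :
    innerIndicator (σ 0) + innerIndicator (σ 3) = innerIndicator (σ 1) + innerIndicator (σ 2) := by
  revert σ; decide

noncomputable def witness : Fin 4 → ℂ := ![1, I, I, 1]

lemma arg_witness (i : Fin 4) : arg (witness i) = π / 2 * innerIndicator i := by
  fin_cases i <;> simp [witness, innerIndicator, arg_I]

lemma witness_eq : (phase witness : Real.Angle) = π := by
  rw [show phase witness = -π by simp [phase, witness, arg_I], Real.Angle.coe_neg,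
    Real.Angle.neg_coe_pi]

lemma comp_perm_witness_of_not_block {σ : Equiv.Perm (Fin 4)}
    (hσ : ¬(({σ 0, σ 3} : Finset (Fin 4)) = {0, 3} ∨ ({σ 0, σ 3} : Finset (Fin 4)) = {1, 2})) :
    phase (fun i => witness (σ i)) = 0 := by
  have hcount := congrArg (Nat.cast : ℕ → ℝ) (innerIndicator_add_eq_of_not_block hσ)
  push_cast at hcount
  simp only [phase, arg_witness]
  linear_combination π / 2 * hcount

end Phase

lemma pair_eq_block_iff_mem (σ : Equiv.Perm (Fin 4)) :
    (({σ 0, σ 3} : Finset (Fin 4)) = {0, 3} ∨ ({σ 0, σ 3} : Finset (Fin 4)) = {1, 2})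
      ↔ (σ 0, σ 1, σ 2, σ 3) ∈
        ({(0,1,2,3), (0,2,1,3), (3,1,2,0), (3,2,1,0),
          (1,0,3,2), (1,3,0,2), (2,0,3,1), (2,3,0,1)} :
          Set (Fin 4 × Fin 4 × Fin 4 × Fin 4)) := by
  simp only [Set.mem_insert_iff, Set.mem_singleton_iff]
  revert σ; decide

theorem stmt_12 (σ : Equiv.Perm (Fin 4)) :
    ((∀ z : Fin 4 → ℂ,
        ((phase (fun i => z (σ i)) : Real.Angle) = (phase z : Real.Angle)) ∨
        ((phase (fun i => z (σ i)) : Real.Angle) = -(phase z : Real.Angle)))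
      ↔ (({σ 0, σ 3} : Finset (Fin 4)) = {0, 3} ∨ ({σ 0, σ 3} : Finset (Fin 4)) = {1, 2}))
    ∧
    ((({σ 0, σ 3} : Finset (Fin 4)) = {0, 3} ∨ ({σ 0, σ 3} : Finset (Fin 4)) = {1, 2})
      ↔ (σ 0, σ 1, σ 2, σ 3) ∈
        ({(0,1,2,3), (0,2,1,3), (3,1,2,0), (3,2,1,0),
          (1,0,3,2), (1,3,0,2), (2,0,3,1), (2,3,0,1)} :
          Set (Fin 4 × Fin 4 × Fin 4 × Fin 4))) := by
  refine ⟨⟨fun h => ?_, fun hσ z => ?_⟩, pair_eq_block_iff_mem σ⟩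
  · by_contra hσ
    obtain h | h := h Phase.witness <;>
    · simp only [Phase.comp_perm_witness_of_not_block hσ, Phase.witness_eq, Real.Angle.neg_coe_pi,
        Real.Angle.coe_zero] at h
      exact Real.Angle.pi_ne_zero h.symm
  · obtain hσ | hσ := hσ
    · exact Or.inl (by rw [Phase.comp_perm_eq_self_of_pair_eq z hσ])
    · exact Or.inr (by rw [Phase.comp_perm_eq_neg_of_pair_eq z hσ, Real.Angle.coe_neg])
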